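/- Let L be a finite set (leaves), E : L → ℝ with E P > 0 for all P, s : L → ℝ, and define V P = s P − log (E P). Let X ⊆ L be nonempty with incumbent B* = max_{P ∈ X} V P. Let F be an index set and for each v ∈ F a nonempty finite subset 𝒫_v ⊆ L, with L \ X ⊆ ⋃_{v ∈ F} 𝒫_v, and reals M_v with s P ≤ M_v for all P ∈ 𝒫_v. Define Key v = M_v − log (min_{P ∈ 𝒫_v} E P). If Key v ≤ B* for all v ∈ F, then V P ≤ B* for every P ∈ L \ X. -/

import Mathlib

lemma Finset.log_inf'_le_log {α : Type*} {S : Finset α} (hS : S.Nonempty) {f : α → ℝ}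
    (hf : ∀ a ∈ S, 0 < f a) {a : α} (ha : a ∈ S) :
    Real.log (S.inf' hS f) ≤ Real.log (f a) :=
  Real.log_le_log ((Finset.lt_inf'_iff hS).2 hf) (Finset.inf'_le f ha)

lemma Finset.sub_log_le_sub_log_inf' {α : Type*} {S : Finset α} (hS : S.Nonempty)
    {E s : α → ℝ} (hE : ∀ a ∈ S, 0 < E a) {M : ℝ} {a : α} (ha : a ∈ S) (hsM : s a ≤ M) :
    s a - Real.log (E a) ≤ M - Real.log (S.inf' hS E) := by
  linarith [Finset.log_inf'_le_log hS hE ha]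

theorem frontier_coverage_exact_general
    {α ι : Type*} (L : Finset α)
    (E s : α → ℝ) (hE : ∀ P ∈ L, 0 < E P)
    (X : Finset α) (hX : X.Nonempty)
    (Pset : ι → Finset α) (hPne : ∀ v : ι, (Pset v).Nonempty)
    (hPL : ∀ v : ι, Pset v ⊆ L)
    (hcover : ∀ P ∈ L, P ∉ X → ∃ v : ι, P ∈ Pset v)
    (M : ι → ℝ) (hM : ∀ v : ι, ∀ P ∈ Pset v, s P ≤ M v)
    (hstop : ∀ v : ι, M v - Real.log ((Pset v).inf' (hPne v) E)
      ≤ X.sup' hX (fun P => s P - Real.log (E P))) :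
    ∀ P ∈ L, P ∉ X →
      s P - Real.log (E P) ≤ X.sup' hX (fun P => s P - Real.log (E P)) := by
  intro P hPL₀ hPX
  obtain ⟨v, hv⟩ := hcover P hPL₀ hPX
  have hEv : ∀ Q ∈ Pset v, 0 < E Q := fun Q hQ => hE Q (hPL v hQ)
  exact (Finset.sub_log_le_sub_log_inf' (hPne v) hEv hv (hM v P hv)).trans (hstop v)

/-- Frontier coverage, Exact mode: with admissible bounds `M v` and keys
`Key v = M v − log (min over Pset v of E)`, if every frontier key is at most the
incumbent `B*`, then no unexpanded leaf has augmented value exceeding `B*`. -/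
theorem frontier_coverage_exact
    {α ι : Type*} (L : Finset α)
    (E s : α → ℝ) (hE : ∀ P ∈ L, 0 < E P)
    (X : Finset α) (hX : X.Nonempty) (hXL : X ⊆ L)
    (Pset : ι → Finset α) (hPne : ∀ v : ι, (Pset v).Nonempty)
    (hPL : ∀ v : ι, Pset v ⊆ L)
    (hcover : ∀ P ∈ L, P ∉ X → ∃ v : ι, P ∈ Pset v)
    (M : ι → ℝ) (hM : ∀ v : ι, ∀ P ∈ Pset v, s P ≤ M v)
    (hstop : ∀ v : ι, M v - Real.log ((Pset v).inf' (hPne v) E)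
      ≤ X.sup' hX (fun P => s P - Real.log (E P))) :
    ∀ P ∈ L, P ∉ X →
      s P - Real.log (E P) ≤ X.sup' hX (fun P => s P - Real.log (E P)) :=
  frontier_coverage_exact_general L E s hE X hX Pset hPne hPL hcover M hM hstop
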